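/- arXiv:2501.05012 — 2 statements merged into one kernel-verified Lean document; each statement's English description precedes it below -/
import Mathlib

section
/- Let (Ω, F, P) be a probability space and p a positive natural number. Let β ∈ ℝ^p be fixed with null set S₀ = {j : β_j = 0}, let β̂, β̃ : Ω → ℝ^p be random vectors, let γ > 0, q ∈ (0,1), and suppose P(‖β̂ − β‖_∞ ≥ γ) ≤ α. Define b_j = |β̃_j| + γ and suppose τ : Ω → (0,∞) is a random threshold satisfying #{j : b_j ≥ τ} ≤ q · max(#{j : |β̂_j| ≥ τ}, 1) almost surely. Then the false discovery rate satisfies E[ #{j ∈ S₀ : |β̂_j| ≥ τ} / max(#{j : |β̂_j| ≥ τ}, 1) ] ≤ q + α. -/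
open MeasureTheory Finset

/-!
Off the event `‖β̂ - β‖ ≥ γ`, every null coordinate has `|β̂_j| < γ ≤ b_j`, so a selected null
index `τ ≤ |β̂_j|` also satisfies `τ ≤ b_j`; the defining inequality of `τ` then bounds the false
discovery proportion by `q`. On the bad event the proportion is at most `1`, so its expectation
is at most `q + P(‖β̂ - β‖ ≥ γ) ≤ q + α`.
-/

section FalseDiscoveryProportion

variable {ι : Type*} [Fintype ι]

noncomputable def falseDiscoveryProportion (β x : ι → ℝ) (τ : ℝ) : ℝ :=
  (((univ.filter (fun j => β j = 0)).filter (fun j => τ ≤ |x j|)).card : ℝ) /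
    max ((univ.filter (fun j => τ ≤ |x j|)).card : ℝ) 1

theorem falseDiscoveryProportion_nonneg (β x : ι → ℝ) (τ : ℝ) :
    0 ≤ falseDiscoveryProportion β x τ := by
  unfold falseDiscoveryProportion
  positivity

theorem falseDiscoveryProportion_le_one (β x : ι → ℝ) (τ : ℝ) :
    falseDiscoveryProportion β x τ ≤ 1 := by
  refine div_le_one_of_le₀ (le_trans ?_ (le_max_left _ _)) (by positivity)
  exact_mod_cast card_le_card (filter_subset_filter _ (filter_subset _ _))

theorem abs_lt_of_norm_sub_lt_of_eq_zero {x β : ι → ℝ} {γ : ℝ} (h : ‖x - β‖ < γ) {j : ι}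
    (hj : β j = 0) : |x j| < γ := by
  have := norm_le_pi_norm (x - β) j
  rw [Pi.sub_apply, hj, sub_zero, Real.norm_eq_abs] at this
  exact this.trans_lt h

theorem falseDiscoveryProportion_le_of_norm_sub_lt {β x y : ι → ℝ} {τ γ q : ℝ}
    (hx : ‖x - β‖ < γ)
    (hτ : ((univ.filter (fun j => τ ≤ |y j| + γ)).card : ℝ) ≤
      q * max ((univ.filter (fun j => τ ≤ |x j|)).card : ℝ) 1) :
    falseDiscoveryProportion β x τ ≤ q := by
  have hnull : (univ.filter (fun j => β j = 0)).filter (fun j => τ ≤ |x j|) ⊆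
      univ.filter (fun j => τ ≤ |y j| + γ) := by
    intro j hj
    simp only [mem_filter, mem_univ, true_and] at hj ⊢
    linarith [abs_lt_of_norm_sub_lt_of_eq_zero hx hj.1, abs_nonneg (y j)]
  rw [falseDiscoveryProportion, div_le_iff₀ (by positivity)]
  exact le_trans (by exact_mod_cast card_le_card hnull) hτ

end FalseDiscoveryProportion

theorem integral_le_add_measureReal_of_ae_le {Ω : Type*} [MeasurableSpace Ω] {μ : Measure Ω}
    [IsProbabilityMeasure μ] {f : Ω → ℝ} {s : Set Ω} {q : ℝ} (hq : 0 ≤ q)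
    (hf₀ : ∀ ω, 0 ≤ f ω) (hf₁ : ∀ ω, f ω ≤ 1) (hfs : ∀ᵐ ω ∂μ, ω ∉ s → f ω ≤ q) :
    ∫ ω, f ω ∂μ ≤ q + μ.real s := by
  set t := toMeasurable μ s
  have ht : MeasurableSet t := measurableSet_toMeasurable μ s
  have hint : Integrable (t.indicator 1) μ := (integrable_const (1 : ℝ)).indicator ht
  have hle : f ≤ᵐ[μ] fun ω => q + t.indicator 1 ω := by
    filter_upwards [hfs] with ω hω
    by_cases hωt : ω ∈ t
    · rw [Set.indicator_of_mem hωt, Pi.one_apply]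
      linarith [hf₁ ω]
    · rw [Set.indicator_of_notMem hωt]
      linarith [hω fun hωs => hωt (subset_toMeasurable μ s hωs)]
  calc ∫ ω, f ω ∂μ
      ≤ ∫ ω, (q + t.indicator 1 ω) ∂μ :=
        integral_mono_of_nonneg (.of_forall hf₀) ((integrable_const q).add hint) hle
    _ = q + μ.real s := by
        rw [integral_add (integrable_const q) hint,
          integral_const, probReal_univ, one_smul, integral_indicator_one ht, measureReal_def,
          measure_toMeasurable, measureReal_def]

theorem stmt5_general {Ω : Type*} [MeasurableSpace Ω] (μ : Measure Ω) [IsProbabilityMeasure μ]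
    {p : ℕ} (β : Fin p → ℝ) (βh βt : Ω → Fin p → ℝ)
    (γ q α : ℝ) (hq : q ∈ Set.Ioo (0:ℝ) 1)
    (herr : (μ {ω | γ ≤ ‖βh ω - β‖}).toReal ≤ α)
    (b : Ω → Fin p → ℝ) (hb : ∀ ω j, b ω j = |βt ω j| + γ)
    (τ : Ω → ℝ)
    (hτ : ∀ᵐ ω ∂μ,
      ((Finset.univ.filter (fun j : Fin p => τ ω ≤ b ω j)).card : ℝ) ≤
        q * max ((Finset.univ.filter (fun j : Fin p => τ ω ≤ |βh ω j|)).card : ℝ) 1) :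
    ∫ ω, (((Finset.univ.filter (fun j : Fin p => β j = 0)).filter
          (fun j => τ ω ≤ |βh ω j|)).card : ℝ) /
        max ((Finset.univ.filter (fun j : Fin p => τ ω ≤ |βh ω j|)).card : ℝ) 1 ∂μ
      ≤ q + α := by
  have hgood : ∀ᵐ ω ∂μ, ω ∉ {ω | γ ≤ ‖βh ω - β‖} →
      falseDiscoveryProportion β (βh ω) (τ ω) ≤ q := by
    filter_upwards [hτ] with ω hτω hω
    simp only [hb] at hτω
    exact falseDiscoveryProportion_le_of_norm_sub_lt (not_le.mp hω) hτω
  calc ∫ ω, falseDiscoveryProportion β (βh ω) (τ ω) ∂μ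
      ≤ q + μ.real {ω | γ ≤ ‖βh ω - β‖} :=
        integral_le_add_measureReal_of_ae_le hq.1.le
          (fun _ => falseDiscoveryProportion_nonneg _ _ _)
          (fun _ => falseDiscoveryProportion_le_one _ _ _) hgood
    _ ≤ q + α := (add_le_add_iff_left q).mpr herr

theorem stmt5 {Ω : Type*} [MeasurableSpace Ω] (μ : Measure Ω) [IsProbabilityMeasure μ]
    {p : ℕ} (hp : 0 < p) (β : Fin p → ℝ) (βh βt : Ω → Fin p → ℝ)
    (γ q α : ℝ) (hγ : 0 < γ) (hq : q ∈ Set.Ioo (0:ℝ) 1)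
    (herr : (μ {ω | γ ≤ ‖βh ω - β‖}).toReal ≤ α)
    (b : Ω → Fin p → ℝ) (hb : ∀ ω j, b ω j = |βt ω j| + γ)
    (τ : Ω → ℝ) (hτpos : ∀ ω, 0 < τ ω)
    (hτ : ∀ᵐ ω ∂μ,
      ((Finset.univ.filter (fun j : Fin p => τ ω ≤ b ω j)).card : ℝ) ≤
        q * max ((Finset.univ.filter (fun j : Fin p => τ ω ≤ |βh ω j|)).card : ℝ) 1)
    (hint : Integrable (fun ω =>
      (((Finset.univ.filter (fun j : Fin p => β j = 0)).filter
          (fun j => τ ω ≤ |βh ω j|)).card : ℝ) /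
        max ((Finset.univ.filter (fun j : Fin p => τ ω ≤ |βh ω j|)).card : ℝ) 1) μ) :
    ∫ ω, (((Finset.univ.filter (fun j : Fin p => β j = 0)).filter
          (fun j => τ ω ≤ |βh ω j|)).card : ℝ) /
        max ((Finset.univ.filter (fun j : Fin p => τ ω ≤ |βh ω j|)).card : ℝ) 1 ∂μ
      ≤ q + α :=
  stmt5_general μ β βh βt γ q α hq herr b hb τ hτ
end

section
/- Let (Ω, F, P) be a probability space, p ≥ 1, and let β̂ : Ω → ℝ^p be a random vector. Fix β ∈ ℝ^p with null set S₀ = {j : β_j = 0}, a measurable b : Ω → ℝ^p, and a random threshold τ : Ω → (0,∞). Let G be an event on which |β̂_j| ≤ b_j for all j ∈ S₀. Then E[ #{j ∈ S₀ : |β̂_j| ≥ τ} / max(#{j : |β̂_j| ≥ τ}, 1) ] ≤ E[ #{j : b_j ≥ τ} / max(#{j : |β̂_j| ≥ τ}, 1) ] + P(Gᶜ). -/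
/-!
On the good event `G` the null discoveries are among the `j` with `τ ≤ b_j`, so the false
discovery proportion is at most the estimated one; off `G` it exceeds the (nonnegative)
estimate by at most `1`, being itself a proportion. Integrating the pointwise bound
`FDP - estimate ≤ 𝟙_{Gᶜ}` gives the claim.
-/

open MeasureTheory

/-- `G` need not be measurable: the bound is integrated against its measurable hull. -/
theorem integral_le_integral_add_measureReal_compl {Ω : Type*} [MeasurableSpace Ω]
    {μ : Measure Ω} [IsFiniteMeasure μ] {f g : Ω → ℝ} {G : Set Ω}
    (hf : Integrable f μ) (hg : Integrable g μ)
    (hle_on : ∀ ω ∈ G, f ω ≤ g ω) (hle_add_one : ∀ ω, f ω ≤ g ω + 1) :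
    ∫ ω, f ω ∂μ ≤ ∫ ω, g ω ∂μ + μ.real Gᶜ := by
  set T := toMeasurable μ Gᶜ
  have hT : MeasurableSet T := measurableSet_toMeasurable μ Gᶜ
  have hpointwise : ∀ ω, f ω - g ω ≤ T.indicator 1 ω := by
    intro ω
    by_cases hω : ω ∈ G
    · have : 0 ≤ T.indicator (1 : Ω → ℝ) ω := Set.indicator_nonneg (fun _ _ => zero_le_one) ω
      linarith [hle_on ω hω]
    · rw [Set.indicator_of_mem (subset_toMeasurable μ Gᶜ hω), Pi.one_apply]
      linarith [hle_add_one ω]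
  have hT_real : μ.real T = μ.real Gᶜ := by
    simp only [measureReal_def, T, measure_toMeasurable]
  calc ∫ ω, f ω ∂μ = ∫ ω, g ω ∂μ + ∫ ω, (f ω - g ω) ∂μ := by
        rw [integral_sub hf hg]; ring
    _ ≤ ∫ ω, g ω ∂μ + ∫ ω, T.indicator 1 ω ∂μ :=
        add_le_add_right
          (integral_mono (hf.sub hg) ((integrable_const 1).indicator hT) hpointwise) _
    _ = ∫ ω, g ω ∂μ + μ.real Gᶜ := by rw [integral_indicator_one hT, hT_real]

theorem Finset.card_div_max_card_one_le_one {α : Type*} {s t : Finset α} (hst : s ⊆ t) :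
    (s.card : ℝ) / max (t.card : ℝ) 1 ≤ 1 := by
  rw [div_le_one (by positivity)]
  exact le_max_of_le_left (by exact_mod_cast Finset.card_le_card hst)

theorem stmt15_general {Ω : Type*} [MeasurableSpace Ω] (μ : Measure Ω) [IsProbabilityMeasure μ]
    {p : ℕ} (β : Fin p → ℝ) (βh : Ω → Fin p → ℝ)
    (b : Ω → Fin p → ℝ) (τ : Ω → ℝ)
    (G : Set Ω)
    (hdom : ∀ ω ∈ G, ∀ j : Fin p, β j = 0 → |βh ω j| ≤ b ω j)
    (hint1 : Integrable (fun ω =>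
      (((Finset.univ.filter (fun j : Fin p => β j = 0)).filter
          (fun j => τ ω ≤ |βh ω j|)).card : ℝ) /
        max ((Finset.univ.filter (fun j : Fin p => τ ω ≤ |βh ω j|)).card : ℝ) 1) μ)
    (hint2 : Integrable (fun ω =>
      ((Finset.univ.filter (fun j : Fin p => τ ω ≤ b ω j)).card : ℝ) /
        max ((Finset.univ.filter (fun j : Fin p => τ ω ≤ |βh ω j|)).card : ℝ) 1) μ) :
    ∫ ω, (((Finset.univ.filter (fun j : Fin p => β j = 0)).filter
          (fun j => τ ω ≤ |βh ω j|)).card : ℝ) /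
        max ((Finset.univ.filter (fun j : Fin p => τ ω ≤ |βh ω j|)).card : ℝ) 1 ∂μ ≤
      (∫ ω, ((Finset.univ.filter (fun j : Fin p => τ ω ≤ b ω j)).card : ℝ) /
        max ((Finset.univ.filter (fun j : Fin p => τ ω ≤ |βh ω j|)).card : ℝ) 1 ∂μ) +
      (μ Gᶜ).toReal := by
  refine integral_le_integral_add_measureReal_compl hint1 hint2 (fun ω hω => ?_) (fun ω => ?_)
  · have hnull_sub : (Finset.univ.filter (fun j : Fin p => β j = 0)).filter
        (fun j => τ ω ≤ |βh ω j|) ⊆ Finset.univ.filter (fun j : Fin p => τ ω ≤ b ω j) := by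
      intro j hj
      simp only [Finset.mem_filter, Finset.mem_univ, true_and] at hj ⊢
      exact hj.2.trans (hdom ω hω j hj.1)
    gcongr
  · have hfdp_le_one := Finset.card_div_max_card_one_le_one
      (Finset.filter_subset_filter (fun j => τ ω ≤ |βh ω j|)
        (Finset.filter_subset (fun j : Fin p => β j = 0) Finset.univ))
    have hestimate_nonneg : (0 : ℝ) ≤
        ((Finset.univ.filter (fun j : Fin p => τ ω ≤ b ω j)).card : ℝ) /
          max ((Finset.univ.filter (fun j : Fin p => τ ω ≤ |βh ω j|)).card : ℝ) 1 := by
      positivity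
    linarith

theorem stmt15 {Ω : Type*} [MeasurableSpace Ω] (μ : Measure Ω) [IsProbabilityMeasure μ]
    {p : ℕ} (hp : 1 ≤ p) (β : Fin p → ℝ) (βh : Ω → Fin p → ℝ)
    (b : Ω → Fin p → ℝ) (τ : Ω → ℝ) (hτpos : ∀ ω, 0 < τ ω)
    (G : Set Ω)
    (hdom : ∀ ω ∈ G, ∀ j : Fin p, β j = 0 → |βh ω j| ≤ b ω j)
    (hint1 : Integrable (fun ω =>
      (((Finset.univ.filter (fun j : Fin p => β j = 0)).filter
          (fun j => τ ω ≤ |βh ω j|)).card : ℝ) /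
        max ((Finset.univ.filter (fun j : Fin p => τ ω ≤ |βh ω j|)).card : ℝ) 1) μ)
    (hint2 : Integrable (fun ω =>
      ((Finset.univ.filter (fun j : Fin p => τ ω ≤ b ω j)).card : ℝ) /
        max ((Finset.univ.filter (fun j : Fin p => τ ω ≤ |βh ω j|)).card : ℝ) 1) μ) :
    ∫ ω, (((Finset.univ.filter (fun j : Fin p => β j = 0)).filter
          (fun j => τ ω ≤ |βh ω j|)).card : ℝ) /
        max ((Finset.univ.filter (fun j : Fin p => τ ω ≤ |βh ω j|)).card : ℝ) 1 ∂μ ≤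
      (∫ ω, ((Finset.univ.filter (fun j : Fin p => τ ω ≤ b ω j)).card : ℝ) /
        max ((Finset.univ.filter (fun j : Fin p => τ ω ≤ |βh ω j|)).card : ℝ) 1 ∂μ) +
      (μ Gᶜ).toReal :=
  stmt15_general μ β βh b τ G hdom hint1 hint2
end
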